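/- Let X be a finite type, p : X → ℝ≥0 a probability distribution, and suppose efficiencies factorize: E₁(α,x) = F₁(α)G₁(x), E₂(β,x) = F₂(β)G₂(x), all positive. For outcome probabilities p₁(s|α,x), p₂(s|β,x) ≥ 0 (s ∈ {+,−}) with Σ_s p₁(s|α,x) = E₁(α,x) and Σ_s p₂(s|β,x) = E₂(β,x), define the postselected joint probabilities q(s₁,s₂|α,β) = (Σₓ p(x) p₁(s₁|α,x) p₂(s₂|β,x)) / (Σₓ p(x) E₁(α,x) E₂(β,x)). Then there exist a probability distribution p̃ on X and conditional probabilities p̃₁(s|α,x), p̃₂(s|β,x) ≥ 0 with Σ_s p̃₁(s|α,x) = 1 and Σ_s p̃₂(s|β,x) = 1, such that q(s₁,s₂|α,β) = Σₓ p̃(x) p̃₁(s₁|α,x) p̃₂(s₂|β,x) for all s₁, s₂, α, β. -/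

import Mathlib

/-!
Since both efficiencies factorize, `p(x) E₁(α,x) E₂(β,x) = F₁(α) F₂(β) · p(x) G₁(x) G₂(x)`,
so the setting-dependent factor `F₁(α) F₂(β)` of the postselection probability cancels from
every postselected joint probability. What remains is the lossless local model with the
reweighted distribution `p̃ ∝ p G₁ G₂` and the renormalized local responses `pᵢ / Eᵢ`.
-/

open Finset

variable {X : Type*} [Fintype X]

theorem sum_mul_pos_of_sum_eq_one {p f : X → ℝ} (hp : ∀ x, 0 ≤ p x) (hp1 : ∑ x, p x = 1)
    (hf : ∀ x, 0 < f x) : 0 < ∑ x, p x * f x := by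
  obtain ⟨x₀, -, hx₀⟩ := exists_ne_zero_of_sum_ne_zero (hp1.trans_ne one_ne_zero)
  exact sum_pos' (fun x _ => mul_nonneg (hp x) (hf x).le)
    ⟨x₀, mem_univ x₀, mul_pos ((hp x₀).lt_of_ne' hx₀) (hf x₀)⟩

theorem postselected_eq_sum_reweighted (p g₁ g₂ a b : X → ℝ) (c₁ c₂ : ℝ)
    (hg₁ : ∀ x, g₁ x ≠ 0) (hg₂ : ∀ x, g₂ x ≠ 0) :
    (∑ x, p x * a x * b x) / (∑ x, p x * (c₁ * g₁ x) * (c₂ * g₂ x)) =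
      ∑ x, p x * g₁ x * g₂ x / (∑ y, p y * g₁ y * g₂ y) * (a x / (c₁ * g₁ x)) *
        (b x / (c₂ * g₂ x)) := by
  have hden : ∑ x, p x * (c₁ * g₁ x) * (c₂ * g₂ x) = c₁ * c₂ * ∑ y, p y * g₁ y * g₂ y := by
    rw [mul_sum]; exact sum_congr rfl fun x _ => by ring
  rw [hden, sum_div]
  refine sum_congr rfl fun x _ => ?_
  have := hg₁ x
  have := hg₂ x
  field_simp

/-- Theorem 1: under factorized (fair-sampling) loss, the postselected joint
probabilities of a lossy LHV model are reproduced exactly by a lossless LHV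
model.  Outcomes s ∈ {+,−} are encoded by `Bool`. -/
theorem fair_sampling_reduction (X S₁ S₂ : Type) [Fintype X]
    (p : X → ℝ) (hp : ∀ x, 0 ≤ p x) (hp1 : ∑ x, p x = 1)
    (F₁ : S₁ → ℝ) (F₂ : S₂ → ℝ) (G₁ G₂ : X → ℝ)
    (hF₁ : ∀ α, 0 < F₁ α) (hF₂ : ∀ β, 0 < F₂ β)
    (hG₁ : ∀ x, 0 < G₁ x) (hG₂ : ∀ x, 0 < G₂ x)
    (E₁ : S₁ → X → ℝ) (E₂ : S₂ → X → ℝ)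
    (hE₁ : ∀ α x, E₁ α x = F₁ α * G₁ x)
    (hE₂ : ∀ β x, E₂ β x = F₂ β * G₂ x)
    (p₁ : Bool → S₁ → X → ℝ) (p₂ : Bool → S₂ → X → ℝ)
    (hp₁0 : ∀ s α x, 0 ≤ p₁ s α x) (hp₂0 : ∀ s β x, 0 ≤ p₂ s β x)
    (hp₁E : ∀ α x, p₁ true α x + p₁ false α x = E₁ α x)
    (hp₂E : ∀ β x, p₂ true β x + p₂ false β x = E₂ β x) :
    ∃ (pt : X → ℝ) (q₁ : Bool → S₁ → X → ℝ) (q₂ : Bool → S₂ → X → ℝ),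
      (∀ x, 0 ≤ pt x) ∧ (∑ x, pt x = 1) ∧
      (∀ s α x, 0 ≤ q₁ s α x) ∧ (∀ s β x, 0 ≤ q₂ s β x) ∧
      (∀ α x, q₁ true α x + q₁ false α x = 1) ∧
      (∀ β x, q₂ true β x + q₂ false β x = 1) ∧
      (∀ (s₁ s₂ : Bool) (α : S₁) (β : S₂),
        (∑ x, p x * p₁ s₁ α x * p₂ s₂ β x)
            / (∑ x, p x * E₁ α x * E₂ β x)
          = ∑ x, pt x * q₁ s₁ α x * q₂ s₂ β x) := by
  have hE₁pos : ∀ α x, 0 < E₁ α x := fun α x => hE₁ α x ▸ mul_pos (hF₁ α) (hG₁ x)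
  have hE₂pos : ∀ β x, 0 < E₂ β x := fun β x => hE₂ β x ▸ mul_pos (hF₂ β) (hG₂ x)
  have hZ : 0 < ∑ x, p x * G₁ x * G₂ x := by
    simpa only [mul_assoc] using
      sum_mul_pos_of_sum_eq_one hp hp1 fun x => mul_pos (hG₁ x) (hG₂ x)
  refine ⟨fun x => p x * G₁ x * G₂ x / ∑ y, p y * G₁ y * G₂ y,
    fun s α x => p₁ s α x / E₁ α x, fun s β x => p₂ s β x / E₂ β x,
    fun x => div_nonneg (mul_nonneg (mul_nonneg (hp x) (hG₁ x).le) (hG₂ x).le) hZ.le,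
    by rw [← sum_div, div_self hZ.ne'],
    fun s α x => div_nonneg (hp₁0 s α x) (hE₁pos α x).le,
    fun s β x => div_nonneg (hp₂0 s β x) (hE₂pos β x).le,
    fun α x => by rw [← add_div, hp₁E, div_self (hE₁pos α x).ne'],
    fun β x => by rw [← add_div, hp₂E, div_self (hE₂pos β x).ne'],
    fun s₁ s₂ α β => ?_⟩
  simp only [hE₁, hE₂]
  exact postselected_eq_sum_reweighted p G₁ G₂ _ _ _ _ (fun x => (hG₁ x).ne')
    fun x => (hG₂ x).ne'
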